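/- Let m > 0, ω > 0, and h ∈ ℝ. Then det(M_RK4(h)) = 1 − (hω)⁶/72 + (hω)⁸/576. Consequently, for every h with 0 < hω < 2√2 one has det(M_RK4(h)) < 1, and therefore M_RK4(h)ᵀ · J · M_RK4(h) ≠ J; that is, the fourth-order Runge–Kutta transition matrix for the harmonic oscillator is not symplectic. -/

import Mathlib

open Matrix

/-- The fourth-order Runge–Kutta transition matrix for the harmonic oscillator. -/
noncomputable def MRK4 (m ω h : ℝ) : Matrix (Fin 2) (Fin 2) ℝ :=
  !![1 - h ^ 2 * ω ^ 2 / 2 + h ^ 4 * ω ^ 4 / 24, h / m * (1 - h ^ 2 * ω ^ 2 / 6);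
     -h * m * ω ^ 2 * (1 - h ^ 2 * ω ^ 2 / 6), 1 - h ^ 2 * ω ^ 2 / 2 + h ^ 4 * ω ^ 4 / 24]

/-- The standard symplectic matrix `J = [[0,1],[-1,0]]`. -/
def J2 : Matrix (Fin 2) (Fin 2) ℝ := !![0, 1; -1, 0]

theorem transpose_mul_J2_mul (M : Matrix (Fin 2) (Fin 2) ℝ) : Mᵀ * J2 * M = M.det • J2 := by
  ext i j
  fin_cases i <;> fin_cases j <;> simp [J2, mul_apply, Fin.sum_univ_two, det_fin_two] <;> ring

theorem det_eq_one_of_transpose_mul_J2_mul {M : Matrix (Fin 2) (Fin 2) ℝ}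
    (hM : Mᵀ * J2 * M = J2) : M.det = 1 := by
  have h01 := congrFun (congrFun (transpose_mul_J2_mul M ▸ hM) 0) 1
  simpa [J2] using h01

theorem det_MRK4 (ω h : ℝ) {m : ℝ} (hm : m ≠ 0) :
    (MRK4 m ω h).det = 1 - (h * ω) ^ 6 / 72 + (h * ω) ^ 8 / 576 := by
  rw [MRK4, det_fin_two_of]
  field_simp
  ring

-- `1 - x⁶/72 + x⁸/576 = 1 - x⁶ (8 - x²) / 576`
theorem one_sub_pow_six_div_add_pow_eight_div_lt_one {x : ℝ} (hx : x ≠ 0) (hx8 : x ^ 2 < 8) :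
    1 - x ^ 6 / 72 + x ^ 8 / 576 < 1 := by
  have hx6 : 0 < x ^ 6 := by positivity
  nlinarith [mul_lt_mul_of_pos_left hx8 hx6]

theorem rk4_det_and_not_symplectic_general
    (m ω h : ℝ) (hm : 0 < m) :
    (MRK4 m ω h).det = 1 - (h * ω) ^ 6 / 72 + (h * ω) ^ 8 / 576 ∧
    (0 < h * ω → h * ω < 2 * Real.sqrt 2 →
      (MRK4 m ω h).det < 1 ∧ (MRK4 m ω h)ᵀ * J2 * MRK4 m ω h ≠ J2) := by
  have hdet := det_MRK4 ω h hm.ne'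
  refine ⟨hdet, fun hpos hlt => ?_⟩
  have hsq : (h * ω) ^ 2 < 8 := by
    nlinarith [Real.sq_sqrt (zero_le_two : (0 : ℝ) ≤ 2), Real.sqrt_nonneg 2]
  have hdet_lt : (MRK4 m ω h).det < 1 :=
    hdet ▸ one_sub_pow_six_div_add_pow_eight_div_lt_one hpos.ne' hsq
  exact ⟨hdet_lt, fun hsymp => hdet_lt.ne (det_eq_one_of_transpose_mul_J2_mul hsymp)⟩

/-- `det M_RK4(h) = 1 - (hω)⁶/72 + (hω)⁸/576`; hence for `0 < hω < 2√2` the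
determinant is `< 1` and `M_RK4(h)` is not symplectic. -/
theorem rk4_det_and_not_symplectic
    (m ω h : ℝ) (hm : 0 < m) (hω : 0 < ω) :
    (MRK4 m ω h).det = 1 - (h * ω) ^ 6 / 72 + (h * ω) ^ 8 / 576 ∧
    (0 < h * ω → h * ω < 2 * Real.sqrt 2 →
      (MRK4 m ω h).det < 1 ∧ (MRK4 m ω h)ᵀ * J2 * MRK4 m ω h ≠ J2) :=
  rk4_det_and_not_symplectic_general m ω h hm
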